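/- arXiv:2401.16942 — 2 statements merged into one kernel-verified Lean document; each statement's English description precedes it below -/
import Mathlib

section
/- Restricted-adversary game value: under the hypotheses of Lemma 2 of the paper (u continuously differentiable, constant on [0,α], strictly decreasing positive on [α,β), δ with u(δ) = u(0)/e), suppose the maximizing player is restricted to x ∈ [0,τ] for some τ ∈ (α, δ). Define g̃ as the density -u'(y)/u(y) on [α,τ] together with an atom of mass 1 - (ln u(0) - ln u(τ)) at τ. Then g̃ is a probability distribution, and against g̃ every x ∈ [0,τ] yields expected payoff at most u(τ)·ln(u(0)/u(τ)), with equality for x ∈ [α,τ]. -/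
/-!
On `(0, τ)` the derivative of `u` is `D = 1_[α,τ] · u'`, because `u` is constant on `[0, α]`;
so the density is `-D/u`, whose integral over `[a, b]` is `log u(a) - log u(b)`, while
`u · (-D/u) = -D` integrates to `u(a) - u(b)`. Splitting the expected payoff of `x` at `y = x`,
the density contributes `u(x)·log (u(0)/u(τ)) + u(τ) - u(x)` and the atom
`(1 - log (u(0)/u(τ)))·(u(x) - u(τ))`; `u(x)` cancels, so every `x ∈ [0, τ]` earns exactly
`u(τ)·log (u(0)/u(τ))`. The atom is nonnegative because `u(τ) > u(δ) = u(0)/e`.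
-/

open MeasureTheory Set Real

section HazardIntegral

variable {f f' : ℝ → ℝ} {a b : ℝ}

lemma intervalIntegrable_neg_deriv_div (hab : a ≤ b) (hf : ContinuousOn f (Icc a b))
    (hint : IntegrableOn f' (Icc a b)) (hpos : ∀ y ∈ Icc a b, 0 < f y) :
    IntervalIntegrable (fun y => -f' y / f y) volume a b := by
  have hinv : ContinuousOn (fun y => (f y)⁻¹) (uIcc a b) := by
    rw [uIcc_of_le hab]
    exact hf.inv₀ fun y hy => (hpos y hy).ne'
  simpa only [div_eq_mul_inv, Pi.neg_apply] using
    ((intervalIntegrable_iff_integrableOn_Icc_of_le hab).mpr hint).neg.mul_continuousOn hinv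

lemma integral_neg_deriv_div_eq_log_sub (hab : a ≤ b) (hf : ContinuousOn f (Icc a b))
    (hf' : ∀ y ∈ Ioo a b, HasDerivAt f (f' y) y) (hint : IntegrableOn f' (Icc a b))
    (hpos : ∀ y ∈ Icc a b, 0 < f y) :
    ∫ y in a..b, -f' y / f y = log (f a) - log (f b) := by
  have hderiv : ∀ y ∈ Ioo a b, HasDerivAt (fun z => -log (f z)) (-f' y / f y) y := fun y hy => by
    simpa only [neg_div] using ((hf' y hy).log (hpos y (Ioo_subset_Icc_self hy)).ne').fun_neg
  rw [intervalIntegral.integral_eq_sub_of_hasDerivAt_of_le hab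
    (hf.log fun y hy => (hpos y hy).ne').fun_neg hderiv
    (intervalIntegrable_neg_deriv_div hab hf hint hpos)]
  ring

lemma integral_mul_neg_deriv_div (hab : a ≤ b) (hf : ContinuousOn f (Icc a b))
    (hf' : ∀ y ∈ Ioo a b, HasDerivAt f (f' y) y) (hint : IntegrableOn f' (Icc a b))
    (hpos : ∀ y ∈ Icc a b, 0 < f y) :
    ∫ y in a..b, f y * (-f' y / f y) = f a - f b := by
  have hcancel : EqOn (fun y => f y * (-f' y / f y)) (fun y => -f' y) (uIcc a b) := by
    intro y hy
    rw [uIcc_of_le hab] at hy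
    field_simp [(hpos y hy).ne']
  rw [intervalIntegral.integral_congr hcancel, intervalIntegral.integral_neg,
    intervalIntegral.integral_eq_sub_of_hasDerivAt_of_le hab hf hf'
      ((intervalIntegrable_iff_integrableOn_Icc_of_le hab).mpr hint)]
  ring

end HazardIntegral

noncomputable def payoff (u : ℝ → ℝ) (x y : ℝ) : ℝ := if x > y then u x else u x - u y

section Payoff

variable {u D : ℝ → ℝ} {a b x : ℝ}

lemma payoff_mul_hazard_ae_eq_of_le (hab : a ≤ b) (hbx : b ≤ x) :
    ∀ᵐ y ∂volume, y ∈ uIoc a b → payoff u x y * (-D y / u y) = u x * (-D y / u y) := by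
  filter_upwards [measure_eq_zero_iff_ae_notMem.mp (measure_singleton x)] with y hyx hy
  rw [uIoc_of_le hab] at hy
  rw [payoff, if_pos (lt_of_le_of_ne (hy.2.trans hbx) hyx)]

lemma payoff_mul_hazard_eqOn_of_ge (hxa : x ≤ a) :
    EqOn (fun y => payoff u x y * (-D y / u y))
      (fun y => u x * (-D y / u y) - u y * (-D y / u y)) (Icc a b) := fun y hy => by
  simp only [payoff, gt_iff_lt, not_lt.mpr (hxa.trans hy.1), if_false, sub_mul]

lemma intervalIntegrable_payoff_mul_hazard_of_le (hab : a ≤ b) (hu : ContinuousOn u (Icc a b))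
    (hDint : IntegrableOn D (Icc a b)) (hpos : ∀ y ∈ Icc a b, 0 < u y) (hbx : b ≤ x) :
    IntervalIntegrable (fun y => payoff u x y * (-D y / u y)) volume a b :=
  ((intervalIntegrable_neg_deriv_div hab hu hDint hpos).const_mul (u x)).congr_ae <|
    (ae_restrict_iff' measurableSet_uIoc).mpr <| by
      filter_upwards [payoff_mul_hazard_ae_eq_of_le (u := u) (D := D) hab hbx] with y h hy
        using (h hy).symm

lemma integral_payoff_mul_hazard_of_le (hab : a ≤ b) (hu : ContinuousOn u (Icc a b))
    (hD : ∀ y ∈ Ioo a b, HasDerivAt u (D y) y) (hDint : IntegrableOn D (Icc a b))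
    (hpos : ∀ y ∈ Icc a b, 0 < u y) (hbx : b ≤ x) :
    ∫ y in a..b, payoff u x y * (-D y / u y) = u x * (log (u a) - log (u b)) := by
  rw [intervalIntegral.integral_congr_ae (payoff_mul_hazard_ae_eq_of_le hab hbx),
    intervalIntegral.integral_const_mul, integral_neg_deriv_div_eq_log_sub hab hu hD hDint hpos]

lemma intervalIntegrable_payoff_mul_hazard_of_ge (hab : a ≤ b) (hu : ContinuousOn u (Icc a b))
    (hDint : IntegrableOn D (Icc a b)) (hpos : ∀ y ∈ Icc a b, 0 < u y) (hxa : x ≤ a) :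
    IntervalIntegrable (fun y => payoff u x y * (-D y / u y)) volume a b := by
  have hh := intervalIntegrable_neg_deriv_div hab hu hDint hpos
  refine ((hh.const_mul (u x)).sub (hh.continuousOn_mul (hu.mono (uIcc_of_le hab).le))).congr ?_
  exact (payoff_mul_hazard_eqOn_of_ge hxa).symm.mono (uIcc_of_le hab ▸ uIoc_subset_uIcc)

lemma integral_payoff_mul_hazard_of_ge (hab : a ≤ b) (hu : ContinuousOn u (Icc a b))
    (hD : ∀ y ∈ Ioo a b, HasDerivAt u (D y) y) (hDint : IntegrableOn D (Icc a b))
    (hpos : ∀ y ∈ Icc a b, 0 < u y) (hxa : x ≤ a) :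
    ∫ y in a..b, payoff u x y * (-D y / u y)
      = u x * (log (u a) - log (u b)) - (u a - u b) := by
  have hh := intervalIntegrable_neg_deriv_div hab hu hDint hpos
  rw [intervalIntegral.integral_congr (uIcc_of_le hab ▸ payoff_mul_hazard_eqOn_of_ge hxa),
    intervalIntegral.integral_sub (hh.const_mul (u x))
      (hh.continuousOn_mul (hu.mono (uIcc_of_le hab).le)),
    intervalIntegral.integral_const_mul, integral_neg_deriv_div_eq_log_sub hab hu hD hDint hpos,
    integral_mul_neg_deriv_div hab hu hD hDint hpos]

end Payoff

lemma payoff_eq_of_mem_Icc {u D : ℝ → ℝ} {τ x : ℝ} (hu : ContinuousOn u (Icc 0 τ))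
    (hD : ∀ y ∈ Ioo 0 τ, HasDerivAt u (D y) y) (hDint : IntegrableOn D (Icc 0 τ))
    (hpos : ∀ y ∈ Icc 0 τ, 0 < u y) (hx : x ∈ Icc 0 τ) :
    (∫ y in (0:ℝ)..τ, payoff u x y * (-D y / u y)) + (1 - log (u 0 / u τ)) * payoff u x τ
      = u τ * log (u 0 / u τ) := by
  obtain ⟨hx0, hxτ⟩ := hx
  have hsub₁ : Icc 0 x ⊆ Icc 0 τ := Icc_subset_Icc le_rfl hxτ
  have hsub₂ : Icc x τ ⊆ Icc 0 τ := Icc_subset_Icc hx0 le_rfl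
  have hD₁ : ∀ y ∈ Ioo 0 x, HasDerivAt u (D y) y := fun y hy => hD y (Ioo_subset_Ioo le_rfl hxτ hy)
  have hD₂ : ∀ y ∈ Ioo x τ, HasDerivAt u (D y) y := fun y hy => hD y (Ioo_subset_Ioo hx0 le_rfl hy)
  rw [← intervalIntegral.integral_add_adjacent_intervals
      (intervalIntegrable_payoff_mul_hazard_of_le hx0 (hu.mono hsub₁) (hDint.mono_set hsub₁)
        (fun y hy => hpos y (hsub₁ hy)) le_rfl)
      (intervalIntegrable_payoff_mul_hazard_of_ge hxτ (hu.mono hsub₂) (hDint.mono_set hsub₂)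
        (fun y hy => hpos y (hsub₂ hy)) le_rfl),
    integral_payoff_mul_hazard_of_le hx0 (hu.mono hsub₁) hD₁ (hDint.mono_set hsub₁)
      (fun y hy => hpos y (hsub₁ hy)) le_rfl,
    integral_payoff_mul_hazard_of_ge hxτ (hu.mono hsub₂) hD₂ (hDint.mono_set hsub₂)
      (fun y hy => hpos y (hsub₂ hy)) le_rfl,
    payoff, if_neg (not_lt.mpr hxτ), log_div (hpos 0 ⟨le_rfl, hx0.trans hxτ⟩).ne'
      (hpos τ ⟨hx0.trans hxτ, le_rfl⟩).ne']
  ring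

section ConstantThenDifferentiable

variable {u u' : ℝ → ℝ} {α τ : ℝ}

lemma hasDerivAt_indicator_of_const_on_Icc (hconst : ∀ x ∈ Icc 0 α, u x = u 0)
    (hderiv : ∀ y ∈ Icc α τ, HasDerivAt u (u' y) y) :
    ∀ y ∈ Ioo 0 τ, HasDerivAt u ((Icc α τ).indicator u' y) y := by
  rintro y ⟨hy0, hyτ⟩
  rcases lt_or_ge y α with hyα | hαy
  · have hlocal : u =ᶠ[nhds y] fun _ => u 0 :=
      Filter.eventually_of_mem (Ioo_mem_nhds hy0 hyα) fun z hz => hconst z (Ioo_subset_Icc_self hz)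
    rw [indicator_of_notMem fun h => (not_le.mpr hyα) h.1]
    exact (hasDerivAt_const y (u 0)).congr_of_eventuallyEq hlocal
  · have hy : y ∈ Icc α τ := ⟨hαy, hyτ.le⟩
    rw [indicator_of_mem hy]
    exact hderiv y hy

lemma continuousOn_Icc_of_const_on_Icc (hα : 0 ≤ α) (hατ : α ≤ τ)
    (hconst : ∀ x ∈ Icc 0 α, u x = u 0) (hderiv : ∀ y ∈ Icc α τ, HasDerivAt u (u' y) y) :
    ContinuousOn u (Icc 0 τ) := by
  rw [← Icc_union_Icc_eq_Icc hα hατ]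
  exact (continuousOn_const.congr hconst).union_of_isClosed
    (fun y hy => (hderiv y hy).continuousAt.continuousWithinAt) isClosed_Icc isClosed_Icc

lemma pos_on_Icc_of_const_on_Icc (hα : 0 ≤ α) (hconst : ∀ x ∈ Icc 0 α, u x = u 0)
    (hpos : ∀ y ∈ Icc α τ, 0 < u y) (hατ : α ≤ τ) : ∀ y ∈ Icc 0 τ, 0 < u y := by
  rintro y ⟨hy0, hyτ⟩
  rcases le_total y α with hyα | hαy
  · rw [hconst y ⟨hy0, hyα⟩, ← hconst α ⟨hα, le_rfl⟩]
    exact hpos α ⟨le_rfl, hατ⟩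
  · exact hpos y ⟨hαy, hyτ⟩

end ConstantThenDifferentiable

lemma log_div_le_one_of_div_exp_le {c w : ℝ} (hc : 0 < c) (hw : c / exp 1 ≤ w) :
    log (c / w) ≤ 1 := by
  have hw₀ : 0 < w := (div_pos hc (exp_pos 1)).trans_le hw
  rw [log_le_iff_le_exp (div_pos hc hw₀), div_le_iff₀ hw₀, mul_comm, ← div_le_iff₀ (exp_pos 1)]
  exact hw

theorem stmt_17_general (α β δ τ : ℝ) (u u' g : ℝ → ℝ) (v : ℝ → ℝ → ℝ)
    (hα : 0 < α)
    (hderiv : ∀ y ∈ Set.Icc α β, HasDerivAt u (u' y) y)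
    (hderivcont : ContinuousOn u' (Set.Icc α β))
    (hconst : ∀ x ∈ Set.Icc 0 α, u x = u 0)
    (hdec : StrictAntiOn u (Set.Icc α β))
    (hposu : ∀ x ∈ Set.Ico α β, 0 < u x)
    (hδ : δ ∈ Set.Ioo α β) (hδe : u δ = u 0 / Real.exp 1)
    (hτ : τ ∈ Set.Ioo α δ)
    (hg : ∀ y, g y = if y ∈ Set.Icc α τ then -u' y / u y else 0)
    (hv : ∀ x y, v x y = if x > y then u x else u x - u y) :
    (0 ≤ 1 - Real.log (u 0 / u τ)) ∧
    (∫ y in α..τ, g y) = Real.log (u 0 / u τ) ∧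
    (∀ x ∈ Set.Icc (0:ℝ) τ,
      (∫ y in (0:ℝ)..τ, v x y * g y) + (1 - Real.log (u 0 / u τ)) * v x τ
        ≤ u τ * Real.log (u 0 / u τ)) ∧
    (∀ x ∈ Set.Icc α τ,
      (∫ y in (0:ℝ)..τ, v x y * g y) + (1 - Real.log (u 0 / u τ)) * v x τ
        = u τ * Real.log (u 0 / u τ)) := by
  obtain ⟨hατ, hτδ⟩ := hτ
  obtain ⟨hαδ, hδβ⟩ := hδ
  have hτβ : τ < β := hτδ.trans hδβ
  have hderivτ : ∀ y ∈ Icc α τ, HasDerivAt u (u' y) y :=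
    fun y hy => hderiv y ⟨hy.1, hy.2.trans hτβ.le⟩
  have hposατ : ∀ y ∈ Icc α τ, 0 < u y := fun y hy => hposu y ⟨hy.1, hy.2.trans_lt hτβ⟩
  have hpos := pos_on_Icc_of_const_on_Icc hα.le hconst hposατ hατ.le
  have hcont := continuousOn_Icc_of_const_on_Icc hα.le hατ.le hconst hderivτ
  have hD := hasDerivAt_indicator_of_const_on_Icc hconst hderivτ
  have hDint : IntegrableOn ((Icc α τ).indicator u') (Icc 0 τ) :=
    ((hderivcont.mono (Icc_subset_Icc le_rfl hτβ.le)).integrableOn_Icc.integrable_indicator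
      measurableSet_Icc).integrableOn
  have hg' : g = fun y => -(Icc α τ).indicator u' y / u y := by
    funext y
    rw [hg, indicator_apply]
    split_ifs <;> simp
  subst hg'
  rw [show v = payoff u from funext₂ hv]
  have hpayoff := fun x hx => payoff_eq_of_mem_Icc (x := x) hcont hD hDint hpos hx
  have hsub : Icc α τ ⊆ Icc 0 τ := Icc_subset_Icc hα.le le_rfl
  refine ⟨sub_nonneg.mpr <| log_div_le_one_of_div_exp_le (hpos 0 ⟨le_rfl, hα.le.trans hατ.le⟩)
      (hδe ▸ (hdec ⟨hατ.le, hτβ.le⟩ ⟨hαδ.le, hδβ.le⟩ hτδ).le), ?_,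
    fun x hx => (hpayoff x hx).le, fun x hx => hpayoff x (hsub hx)⟩
  rw [integral_neg_deriv_div_eq_log_sub hατ.le (hcont.mono hsub)
      (fun y hy => hD y (Ioo_subset_Ioo hα.le le_rfl hy)) (hDint.mono_set hsub) hposατ,
    log_div (hpos 0 ⟨le_rfl, hα.le.trans hατ.le⟩).ne' (hposατ τ ⟨hατ.le, le_rfl⟩).ne',
    hconst α ⟨hα.le, le_rfl⟩]

/-- Restricted-adversary game: the strategy g̃ consisting of the hazard density
-u'/u on [α,τ] plus an atom of mass 1 - ln(u(0)/u(τ)) at τ is a probability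
distribution, and against it every x ∈ [0,τ] yields expected payoff at most
u(τ)·ln(u(0)/u(τ)), with equality for x ∈ [α,τ]. Here v(x,y) = u(x) if x > y
and u(x) - u(y) if x ≤ y. -/
theorem stmt_17 (α β δ τ : ℝ) (u u' g : ℝ → ℝ) (v : ℝ → ℝ → ℝ)
    (hα : 0 < α) (hαβ : α < β)
    (hderiv : ∀ y ∈ Set.Icc α β, HasDerivAt u (u' y) y)
    (hderivcont : ContinuousOn u' (Set.Icc α β))
    (hconst : ∀ x ∈ Set.Icc 0 α, u x = u 0)
    (hdec : StrictAntiOn u (Set.Icc α β))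
    (hposu : ∀ x ∈ Set.Ico α β, 0 < u x)
    (hδ : δ ∈ Set.Ioo α β) (hδe : u δ = u 0 / Real.exp 1)
    (hτ : τ ∈ Set.Ioo α δ)
    (hg : ∀ y, g y = if y ∈ Set.Icc α τ then -u' y / u y else 0)
    (hv : ∀ x y, v x y = if x > y then u x else u x - u y) :
    (0 ≤ 1 - Real.log (u 0 / u τ)) ∧
    (∫ y in α..τ, g y) = Real.log (u 0 / u τ) ∧
    (∀ x ∈ Set.Icc (0:ℝ) τ,
      (∫ y in (0:ℝ)..τ, v x y * g y) + (1 - Real.log (u 0 / u τ)) * v x τ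
        ≤ u τ * Real.log (u 0 / u τ)) ∧
    (∀ x ∈ Set.Icc α τ,
      (∫ y in (0:ℝ)..τ, v x y * g y) + (1 - Real.log (u 0 / u τ)) * v x τ
        = u τ * Real.log (u 0 / u τ)) :=
  stmt_17_general α β δ τ u u' g v hα hderiv hderivcont hconst hdec hposu hδ hδe hτ hg hv
end

section
/- In the binary-type model with b₂ - b₁ = 1 and prior μ ∈ (0,1) of the low type, no segmentation achieves regret below U*(0)/e, and the BBM (hazard-rate) segmentation achieves regret exactly U*(0)/e; hence the minimax regret min_σ max_s (U*(s) - U(σ,s)) equals U*(0)/e, where U*(0) = min(b₁μ, 1-μ) ... specifically U*(0) = 1-μ if μ > 1/b₂ and b₁μ if μ ≤ 1/b₂. -/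
open MeasureTheory

/-- Optimal buyer surplus in the binary model (closed form of Lemma 3):
U*(s) = 1-μ for s < b₂ - 1/μ, (b₁-s)·μ for b₂ - 1/μ ≤ s ≤ b₁, and 0 beyond. -/
noncomputable def binUstar (b₁ b₂ μ s : ℝ) : ℝ :=
  if s < b₂ - 1 / μ then 1 - μ else if s ≤ b₁ then (b₁ - s) * μ else 0

/-- Buyer surplus at a posterior with probability p of the low type b₁, when
the seller with valuation s best-responds (ties broken toward the low price):
1-p if the low price b₁ is optimal, 0 otherwise. -/
noncomputable def binSurplus (b₁ b₂ p s : ℝ) : ℝ :=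
  if (b₂ - s) * (1 - p) ≤ b₁ - s then 1 - p else 0

/-!
Write `r = U*(0)/e`. For the upper bound, draw a hypothetical seller valuation `t` from the
hazard density `(b₁ - t)⁻¹ = -U*'(t)/U*(t)` on `[b₁ - U*(0)/μ, b₁ - r/μ]`, an interval of hazard
mass `log e = 1`, and split the prior between the posterior `0` and the posterior `(b₂ - t)⁻¹` at
which seller `t` is indifferent (the BBM segmentation for `t`). A seller with valuation `s` then
prices low exactly in the segments with `t ≥ s`, each of which contributes surplus at rate `μ`,
so the buyer gets `max 0 (min U*(0) ((b₁ - s)μ) - r)`: `U*(s)` minus at most `r`.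

For the lower bound, an adversary draws the seller valuation with quantile function
`v ↦ b₁ - min(U*(0), r/v)/μ`, `v` uniform on `(0, 1]`. Then `U*` has mean `2r`, while at every
posterior `p` the expected surplus is at most `r p / μ`; averaging over a segmentation with mean
`μ` (Fubini) gives at most `r`. So the expected regret is at least `r`, and some valuation in the
adversary's support has regret at least `r`.
-/

open Set Real

section BinaryModel

variable {b₁ μ p s t : ℝ}

lemma binSurplus_eq_ite :
    binSurplus b₁ (b₁ + 1) p s = if 1 ≤ (b₁ + 1 - s) * p then 1 - p else 0 := by
  unfold binSurplus
  congr 1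
  apply propext
  constructor <;> intro h <;> linarith

lemma binSurplus_zero : binSurplus b₁ (b₁ + 1) 0 s = 0 := by
  simp [binSurplus_eq_ite]

lemma binSurplus_of_pos (hp : 0 < p) :
    binSurplus b₁ (b₁ + 1) p s = if s ≤ b₁ + 1 - p⁻¹ then 1 - p else 0 := by
  rw [binSurplus_eq_ite]
  congr 1
  rw [← div_le_iff₀ hp, one_div, le_sub_comm]

lemma binSurplus_inv_sub (ht : t < b₁ + 1) :
    binSurplus b₁ (b₁ + 1) (b₁ + 1 - t)⁻¹ s = if s ≤ t then 1 - (b₁ + 1 - t)⁻¹ else 0 := by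
  rw [binSurplus_of_pos (inv_pos.2 (by linarith)), inv_inv, sub_sub_cancel]

lemma abs_binSurplus_le_one (hp : p ∈ Icc (0 : ℝ) 1) : |binSurplus b₁ (b₁ + 1) p s| ≤ 1 := by
  rw [abs_le, binSurplus_eq_ite]; split_ifs <;> constructor <;> linarith [hp.1, hp.2]

lemma measurable_binSurplus_uncurry (b₁ b₂ : ℝ) :
    Measurable fun z : ℝ × ℝ => binSurplus b₁ b₂ z.1 z.2 := by
  unfold binSurplus
  exact Measurable.ite (measurableSet_le (by fun_prop) (by fun_prop)) (by fun_prop) (by fun_prop)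

lemma measurable_binSurplus_left (b₁ b₂ s : ℝ) : Measurable fun p => binSurplus b₁ b₂ p s :=
  (measurable_binSurplus_uncurry b₁ b₂).comp (measurable_id.prodMk measurable_const)

lemma measurable_binUstar (b₁ b₂ μ : ℝ) : Measurable (binUstar b₁ b₂ μ) := by
  unfold binUstar
  exact Measurable.ite (measurableSet_lt (by fun_prop) (by fun_prop)) (by fun_prop)
    (Measurable.ite (measurableSet_le (by fun_prop) (by fun_prop)) (by fun_prop) (by fun_prop))

lemma binUstar_eq_max_min (hμ : 0 < μ) (hμ₁ : μ ≤ 1) (hs : 0 ≤ s) :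
    binUstar b₁ (b₁ + 1) μ s = max 0 (min (min (b₁ * μ) (1 - μ)) ((b₁ - s) * μ)) := by
  have key : s < b₁ + 1 - 1 / μ ↔ 1 - μ < (b₁ - s) * μ := by
    rw [← sub_pos, ← sub_pos (b := 1 - μ)]
    constructor <;> intro h
    · have := mul_pos h hμ; field_simp at this ⊢; linarith
    · have := div_pos h hμ; field_simp at this ⊢; linarith
  unfold binUstar
  split_ifs with h₁ h₂
  · have := key.1 h₁
    rw [min_eq_right (b := 1 - μ) (by nlinarith), min_eq_left this.le, max_eq_right (by linarith)]
  · have := key.not.1 h₁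
    rw [min_eq_right (le_min (by nlinarith) (by linarith)), max_eq_right (by nlinarith)]
  · rw [max_eq_left (min_le_of_right_le (by nlinarith))]

lemma min_mul_one_sub_eq_ite (hb : 0 < b₁ + 1) :
    min (b₁ * μ) (1 - μ) = if 1 / (b₁ + 1) < μ then 1 - μ else b₁ * μ := by
  have : 1 / (b₁ + 1) < μ ↔ 1 - μ < b₁ * μ := by
    rw [div_lt_iff₀ hb]; constructor <;> intro h <;> linarith
  split_ifs with h
  · exact min_eq_right (this.1 h).le
  · exact min_eq_left (not_lt.1 (this.not.1 h))

end BinaryModel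

section AtomAddMapDensity

noncomputable def atomAddMapDensity (c x₀ : ℝ) (I : Set ℝ) (ψ g : ℝ → ℝ) : Measure ℝ :=
  ENNReal.ofReal c • Measure.dirac x₀ +
    ((volume.restrict I).withDensity fun t => ENNReal.ofReal (ψ t)).map g

variable {c x₀ : ℝ} {I : Set ℝ} {ψ g : ℝ → ℝ}

lemma isProbabilityMeasure_atomAddMapDensity (hc : 0 ≤ c) (hg : Measurable g)
    (hI : MeasurableSet I) (hψ : IntegrableOn ψ I) (hψ₀ : ∀ t ∈ I, 0 ≤ ψ t)
    (hmass : c + ∫ t in I, ψ t = 1) : IsProbabilityMeasure (atomAddMapDensity c x₀ I ψ g) := by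
  constructor
  rw [atomAddMapDensity, Measure.add_apply, Measure.smul_apply, Measure.map_apply hg .univ,
    preimage_univ, withDensity_apply _ .univ, Measure.restrict_univ, measure_univ, smul_eq_mul,
    mul_one, ← ofReal_integral_eq_lintegral_ofReal hψ (ae_restrict_of_forall_mem hI hψ₀),
    ← ENNReal.ofReal_add hc (setIntegral_nonneg hI hψ₀), hmass, ENNReal.ofReal_one]

lemma ae_mem_atomAddMapDensity {S : Set ℝ} (hS : MeasurableSet S) (hx₀ : x₀ ∈ S)
    (hg : Measurable g) (hI : MeasurableSet I) (hgI : MapsTo g I S) :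
    ∀ᵐ p ∂(atomAddMapDensity c x₀ I ψ g), p ∈ S := by
  rw [atomAddMapDensity, ae_add_measure_iff]
  exact ⟨Measure.ae_smul_measure ((ae_dirac_iff hS).2 hx₀) _,
    (ae_map_iff hg.aemeasurable hS).2 <|
      withDensity_absolutelyContinuous _ _ (ae_restrict_of_forall_mem hI hgI)⟩

lemma integral_atomAddMapDensity (hc : 0 ≤ c) (hg : Measurable g) (hI : MeasurableSet I)
    (hψ : Measurable ψ) (hψ₀ : ∀ t ∈ I, 0 ≤ ψ t) {f : ℝ → ℝ} (hf : Measurable f)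
    (hint : IntegrableOn (fun t => ψ t * f (g t)) I) :
    ∫ p, f p ∂(atomAddMapDensity c x₀ I ψ g) = c * f x₀ + ∫ t in I, ψ t * f (g t) := by
  have hψnn : Measurable fun t => (ψ t).toNNReal := hψ.real_toNNReal
  have hsmul : ∀ t ∈ I, (ψ t).toNNReal • f (g t) = ψ t * f (g t) := fun t ht => by
    rw [NNReal.smul_def, Real.coe_toNNReal _ (hψ₀ t ht), smul_eq_mul]
  have hmap :
      Integrable f (((volume.restrict I).withDensity fun t => ENNReal.ofReal (ψ t)).map g) := by
    rw [integrable_map_measure hf.aestronglyMeasurable hg.aemeasurable]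
    exact (integrable_withDensity_iff_integrable_smul hψnn).2
      (hint.congr_fun (fun t ht => (hsmul t ht).symm) hI)
  rw [atomAddMapDensity, integral_add_measure
    ((integrable_dirac' hf.stronglyMeasurable (by simp)).smul_measure ENNReal.ofReal_ne_top) hmap,
    integral_smul_measure, integral_dirac, ENNReal.toReal_ofReal hc, smul_eq_mul,
    integral_map hg.aemeasurable hf.aestronglyMeasurable]
  congr 1
  exact (integral_withDensity_eq_integral_smul hψnn _).trans (setIntegral_congr_fun hI hsmul)

end AtomAddMapDensity

lemma integral_inv_sub {a b d : ℝ} (ha : a < d) (hb : b < d) :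
    ∫ t in a..b, (d - t)⁻¹ = log ((d - a) / (d - b)) := by
  rw [intervalIntegral.integral_comp_sub_left (fun x => x⁻¹) d,
    integral_inv_of_pos (by linarith) (by linarith)]

lemma intervalIntegrable_inv_sub {a b d : ℝ} (ha : a < d) (hb : b < d) :
    IntervalIntegrable (fun t => (d - t)⁻¹) volume a b := by
  refine ContinuousOn.intervalIntegrable ((continuousOn_const.sub continuousOn_id).inv₀ ?_)
  exact fun t ht => sub_ne_zero.2 (ht.2.trans_lt (max_lt ha hb)).ne'

lemma setIntegral_Icc_eq_intervalIntegral {a b : ℝ} (hab : a ≤ b) (f : ℝ → ℝ) :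
    ∫ t in Icc a b, f t = ∫ t in a..b, f t := by
  rw [integral_Icc_eq_integral_Ioc, intervalIntegral.integral_of_le hab]

section BBM

variable {b₁ μ u : ℝ}

/-- The density is the hazard density `(b₁ - t)⁻¹` of the hypothetical valuation `t` times the
weight `μ (b₂ - t)` of the posterior `(b₂ - t)⁻¹` in the BBM split for `t`; the posterior-`0`
parts of all these splits are pooled into the atom. -/
noncomputable def bbmSegmentation (b₁ μ u : ℝ) : Measure ℝ :=
  atomAddMapDensity (1 - μ - u + u / exp 1) 0 (Icc (b₁ - u / μ) (b₁ - u / exp 1 / μ))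
    (fun t => μ * (b₁ + 1 - t) / (b₁ - t)) (fun t => (b₁ + 1 - t)⁻¹)

variable (hμ : 0 < μ) (hu : 0 < u)
include hμ hu

lemma hazard_interval_le : b₁ - u / μ ≤ b₁ - u / exp 1 / μ := by
  have : u / exp 1 < u := div_lt_self hu (one_lt_exp_iff.2 one_pos)
  gcongr

lemma hazard_right_lt : b₁ - u / exp 1 / μ < b₁ := sub_lt_self _ (by positivity)

lemma hazard_left_lt : b₁ - u / μ < b₁ :=
  (hazard_interval_le hμ hu).trans_lt (hazard_right_lt hμ hu)

lemma lt_of_mem_hazard_interval {t : ℝ} (ht : t ∈ Icc (b₁ - u / μ) (b₁ - u / exp 1 / μ)) :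
    t < b₁ :=
  ht.2.trans_lt (hazard_right_lt hμ hu)

lemma integral_hazard_eq_one : ∫ t in b₁ - u / μ..b₁ - u / exp 1 / μ, (b₁ - t)⁻¹ = 1 := by
  rw [integral_inv_sub (hazard_left_lt hμ hu) (hazard_right_lt hμ hu), sub_sub_cancel,
    sub_sub_cancel, div_div_div_cancel_right₀ hμ.ne', div_div_cancel₀ hu.ne', log_exp]

lemma bbmDensity_eq {t : ℝ} (ht : t ∈ Icc (b₁ - u / μ) (b₁ - u / exp 1 / μ)) :
    μ * (b₁ + 1 - t) / (b₁ - t) = μ + μ * (b₁ - t)⁻¹ := by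
  have : b₁ - t ≠ 0 := sub_ne_zero.2 (lt_of_mem_hazard_interval hμ hu ht).ne'
  field_simp
  ring

lemma integral_bbmDensity :
    ∫ t in Icc (b₁ - u / μ) (b₁ - u / exp 1 / μ), μ * (b₁ + 1 - t) / (b₁ - t) =
      u - u / exp 1 + μ := by
  have hle := hazard_interval_le (b₁ := b₁) hμ hu
  rw [setIntegral_congr_fun measurableSet_Icc fun t ht => bbmDensity_eq hμ hu ht,
    setIntegral_Icc_eq_intervalIntegral hle, intervalIntegral.integral_add intervalIntegrable_const
      ((intervalIntegrable_inv_sub (hazard_left_lt hμ hu) (hazard_right_lt hμ hu)).const_mul μ),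
    intervalIntegral.integral_const_mul, integral_hazard_eq_one hμ hu,
    intervalIntegral.integral_const, smul_eq_mul]
  field_simp
  ring

lemma continuousOn_bbmDensity :
    ContinuousOn (fun t => μ * (b₁ + 1 - t) / (b₁ - t))
      (Icc (b₁ - u / μ) (b₁ - u / exp 1 / μ)) :=
  ContinuousOn.div (by fun_prop) (by fun_prop) fun t ht =>
    sub_ne_zero.2 (lt_of_mem_hazard_interval hμ hu ht).ne'

omit hμ in
lemma bbmAtom_nonneg (hu₁ : u ≤ 1 - μ) : 0 ≤ 1 - μ - u + u / exp 1 := by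
  linarith [div_pos hu (exp_pos 1)]

lemma bbmDensity_nonneg {t : ℝ} (ht : t ∈ Icc (b₁ - u / μ) (b₁ - u / exp 1 / μ)) :
    0 ≤ μ * (b₁ + 1 - t) / (b₁ - t) := by
  have := lt_of_mem_hazard_interval hμ hu ht
  exact div_nonneg (mul_nonneg hμ.le (by linarith)) (by linarith)

lemma isProbabilityMeasure_bbmSegmentation (hu₁ : u ≤ 1 - μ) :
    IsProbabilityMeasure (bbmSegmentation b₁ μ u) := by
  refine isProbabilityMeasure_atomAddMapDensity (bbmAtom_nonneg hu hu₁)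
    (by fun_prop) measurableSet_Icc (continuousOn_bbmDensity hμ hu).integrableOn_Icc
    (fun t => bbmDensity_nonneg hμ hu) (by rw [integral_bbmDensity hμ hu]; ring)

lemma ae_mem_Icc_bbmSegmentation : ∀ᵐ p ∂(bbmSegmentation b₁ μ u), p ∈ Icc (0 : ℝ) 1 := by
  refine ae_mem_atomAddMapDensity measurableSet_Icc ⟨le_rfl, zero_le_one⟩ (by fun_prop)
    measurableSet_Icc fun t ht => ?_
  have := lt_of_mem_hazard_interval hμ hu ht
  exact ⟨inv_nonneg.2 (by linarith), inv_le_one_of_one_le₀ (by linarith)⟩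

lemma integral_id_bbmSegmentation (hu₁ : u ≤ 1 - μ) :
    ∫ p, p ∂(bbmSegmentation b₁ μ u) = μ := by
  have hne : ∀ t ∈ Icc (b₁ - u / μ) (b₁ - u / exp 1 / μ), b₁ + 1 - t ≠ 0 := fun t ht => by
    linarith [lt_of_mem_hazard_interval hμ hu ht]
  have hψ : ∀ t ∈ Icc (b₁ - u / μ) (b₁ - u / exp 1 / μ),
      μ * (b₁ + 1 - t) / (b₁ - t) * (b₁ + 1 - t)⁻¹ = μ * (b₁ - t)⁻¹ := fun t ht => by
    have := hne t ht
    field_simp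
  have hint : IntegrableOn (fun t => μ * (b₁ + 1 - t) / (b₁ - t) * (b₁ + 1 - t)⁻¹)
      (Icc (b₁ - u / μ) (b₁ - u / exp 1 / μ)) :=
    ((continuousOn_bbmDensity hμ hu).mul (ContinuousOn.inv₀ (by fun_prop) hne)).integrableOn_Icc
  rw [bbmSegmentation, integral_atomAddMapDensity (bbmAtom_nonneg hu hu₁) (by fun_prop)
      measurableSet_Icc (by fun_prop) (fun t => bbmDensity_nonneg hμ hu) measurable_id' hint,
    setIntegral_congr_fun measurableSet_Icc hψ,
    setIntegral_Icc_eq_intervalIntegral (hazard_interval_le hμ hu),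
    intervalIntegral.integral_const_mul, integral_hazard_eq_one hμ hu]
  ring

lemma integral_binSurplus_bbmSegmentation (hu₁ : u ≤ 1 - μ) (s : ℝ) :
    ∫ p, binSurplus b₁ (b₁ + 1) p s ∂(bbmSegmentation b₁ μ u) =
      max 0 (min u ((b₁ - s) * μ) - u / exp 1) := by
  have hψ : ∀ t ∈ Icc (b₁ - u / μ) (b₁ - u / exp 1 / μ),
      μ * (b₁ + 1 - t) / (b₁ - t) * binSurplus b₁ (b₁ + 1) (b₁ + 1 - t)⁻¹ s =
        (Icc s (b₁ - u / exp 1 / μ)).indicator (fun _ => μ) t := fun t ht => by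
    have := lt_of_mem_hazard_interval hμ hu ht
    rw [binSurplus_inv_sub (by linarith)]
    by_cases hst : s ≤ t
    · have : b₁ + 1 - t ≠ 0 := by linarith
      have : b₁ - t ≠ 0 := by linarith
      rw [if_pos hst, indicator_of_mem (mem_Icc.2 ⟨hst, ht.2⟩)]
      field_simp
      ring
    · rw [if_neg hst, indicator_of_notMem (fun h => hst h.1), mul_zero]
  have hint : IntegrableOn ((Icc s (b₁ - u / exp 1 / μ)).indicator fun _ => μ)
      (Icc (b₁ - u / μ) (b₁ - u / exp 1 / μ)) :=
    (integrableOn_const measure_Icc_lt_top.ne).indicator measurableSet_Icc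
  rw [bbmSegmentation, integral_atomAddMapDensity (bbmAtom_nonneg hu hu₁) (by fun_prop)
      measurableSet_Icc (by fun_prop) (fun t => bbmDensity_nonneg hμ hu)
      (measurable_binSurplus_left b₁ (b₁ + 1) s)
      (hint.congr_fun (fun t ht => (hψ t ht).symm) measurableSet_Icc),
    binSurplus_zero, mul_zero, zero_add, setIntegral_congr_fun measurableSet_Icc hψ,
    setIntegral_indicator measurableSet_Icc, Icc_inter_Icc, min_self, setIntegral_const,
    volume_real_Icc, smul_eq_mul, max_mul_of_nonneg _ _ hμ.le, zero_mul, max_comm,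
    ← min_sub_sub_left, min_mul_of_nonneg _ _ hμ.le, ← min_sub_sub_right]
  congr 2 <;> field_simp <;> ring

end BBM

lemma integral_min_div {r u : ℝ} (hr : 0 < r) (hru : r ≤ u) :
    ∫ v in (0 : ℝ)..1, min u (r / v) = r + r * log (u / r) := by
  have hu : 0 < u := hr.trans_le hru
  have hc : 0 < r / u := div_pos hr hu
  have hc₁ : r / u ≤ 1 := (div_le_one hu).2 hru
  have h₁ : EqOn (fun v => min u (r / v)) (fun _ => u) (uIoo 0 (r / u)) := fun v hv => by
    rw [uIoo_of_le hc.le] at hv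
    refine min_eq_left ?_
    rw [le_div_iff₀ hv.1, mul_comm, ← le_div_iff₀ hu]
    exact hv.2.le
  have h₂ : EqOn (fun v => min u (r / v)) (fun v => r * v⁻¹) (uIcc (r / u) 1) := fun v hv => by
    rw [uIcc_of_le hc₁] at hv
    have hv₀ : 0 < v := hc.trans_le hv.1
    refine (min_eq_right ?_).trans (div_eq_mul_inv r v)
    rw [div_le_iff₀ hv₀, mul_comm, ← div_le_iff₀ hu]
    exact hv.1
  have hne : ∀ v ∈ uIcc (r / u) 1, id v ≠ 0 := fun v hv => by
    rw [uIcc_of_le hc₁] at hv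
    exact (hc.trans_le hv.1).ne'
  rw [← intervalIntegral.integral_add_adjacent_intervals (b := r / u)
      (intervalIntegrable_const.congr_uIoo h₁.symm)
      (((intervalIntegral.intervalIntegrable_inv (f := id) hne continuousOn_id).const_mul r).congr
        (h₂.symm.mono uIoc_subset_uIcc)),
    intervalIntegral.integral_congr_uIoo h₁, intervalIntegral.integral_congr h₂,
    intervalIntegral.integral_const, intervalIntegral.integral_const_mul,
    integral_inv_of_pos hc one_pos, one_div_div, smul_eq_mul, sub_zero, div_mul_cancel₀ _ hu.ne']

/-- Quantile function of the adversary's distribution `F_{β*}` of seller valuations: an atom of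
mass `1/e` at `b₁ - u/μ`, then the distribution function `u / (e μ (b₁ - s))` up to
`b₁ - u/(eμ)`. -/
noncomputable def advQuantile (b₁ μ u v : ℝ) : ℝ := b₁ - min u (u / exp 1 / v) / μ

section Adversary

variable {b₁ μ u : ℝ}

lemma measurable_advQuantile (b₁ μ u : ℝ) : Measurable (advQuantile b₁ μ u) := by
  unfold advQuantile; fun_prop

lemma advQuantile_nonneg (hμ : 0 < μ) (hub : u ≤ b₁ * μ) (v : ℝ) :
    0 ≤ advQuantile b₁ μ u v := by
  rw [advQuantile, sub_nonneg, div_le_iff₀ hμ]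
  exact (min_le_left _ _).trans hub

lemma binUstar_advQuantile (hμ : 0 < μ) (hμ₁ : μ ≤ 1) (hu : 0 ≤ u) (hub : u ≤ b₁ * μ)
    (hu₁ : u ≤ 1 - μ) {v : ℝ} (hv : 0 < v) :
    binUstar b₁ (b₁ + 1) μ (advQuantile b₁ μ u v) = min u (u / exp 1 / v) := by
  rw [binUstar_eq_max_min hμ hμ₁ (advQuantile_nonneg hμ hub v), advQuantile, sub_sub_cancel,
    div_mul_cancel₀ _ hμ.ne', min_eq_right ((min_le_left _ _).trans (le_min hub hu₁)),
    max_eq_right (le_min hu (by positivity))]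

lemma integral_binUstar_advQuantile (hμ : 0 < μ) (hμ₁ : μ ≤ 1) (hu : 0 < u) (hub : u ≤ b₁ * μ)
    (hu₁ : u ≤ 1 - μ) :
    ∫ v in Ioc 0 1, binUstar b₁ (b₁ + 1) μ (advQuantile b₁ μ u v) = 2 * (u / exp 1) := by
  rw [setIntegral_congr_fun measurableSet_Ioc fun v hv =>
      binUstar_advQuantile hμ hμ₁ hu.le hub hu₁ hv.1,
    ← intervalIntegral.integral_of_le zero_le_one,
    integral_min_div (by positivity) (div_le_self hu.le (one_le_exp zero_le_one)),
    div_div_cancel₀ hu.ne', log_exp]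
  ring

lemma integral_binSurplus_advQuantile_le (hμ : 0 < μ) (hu : 0 < u) {p : ℝ}
    (hp : p ∈ Icc (0 : ℝ) 1) :
    ∫ v in Ioc 0 1, binSurplus b₁ (b₁ + 1) p (advQuantile b₁ μ u v) ≤ u / exp 1 / μ * p := by
  obtain rfl | hp₀ := hp.1.eq_or_lt
  · simp [binSurplus_zero]
  obtain rfl | hp₁ := hp.2.eq_or_lt
  · simp [binSurplus_eq_ite]
    positivity
  set k := u / exp 1 * p / (μ * (1 - p))
  have hp₁' : 0 < 1 - p := by linarith
  have hk : 0 ≤ k := by positivity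
  have hle : ∀ v ∈ Ioc (0 : ℝ) 1, binSurplus b₁ (b₁ + 1) p (advQuantile b₁ μ u v) ≤
      (Iic k).indicator (fun _ => 1 - p) v := fun v hv => by
    rw [binSurplus_of_pos hp₀]
    split_ifs with hτ
    · refine (indicator_of_mem (?_ : v ∈ Iic k) (fun _ => 1 - p)).ge
      have h₁ : p⁻¹ - 1 ≤ u / exp 1 / v / μ := by
        unfold advQuantile at hτ
        linarith [div_le_div_of_nonneg_right (min_le_right u (u / exp 1 / v)) hμ.le]
      have hv₀ : 0 < v := hv.1
      have h₂ := mul_le_mul_of_nonneg_left h₁ (by positivity : 0 ≤ p * v * μ)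
      show v ≤ k
      rw [le_div_iff₀ (by positivity), div_mul_eq_mul_div, le_div_iff₀ (exp_pos 1)]
      field_simp at h₂
      linarith
    · exact indicator_nonneg (f := fun _ => 1 - p) (fun _ _ => sub_nonneg.2 hp.2) v
  have hmeas : Measurable fun v => binSurplus b₁ (b₁ + 1) p (advQuantile b₁ μ u v) :=
    (measurable_binSurplus_uncurry _ _).comp
      (measurable_const.prodMk (measurable_advQuantile _ _ _))
  calc ∫ v in Ioc 0 1, binSurplus b₁ (b₁ + 1) p (advQuantile b₁ μ u v)
      ≤ ∫ v in Ioc 0 1, (Iic k).indicator (fun _ => 1 - p) v :=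
        setIntegral_mono_on (IntegrableOn.of_bound measure_Ioc_lt_top
          hmeas.aestronglyMeasurable 1 (ae_of_all _ fun v => abs_binSurplus_le_one hp))
          ((integrableOn_const measure_Ioc_lt_top.ne).indicator measurableSet_Iic)
          measurableSet_Ioc hle
    _ = volume.real (Ioc 0 1 ∩ Iic k) * (1 - p) := by
        rw [setIntegral_indicator measurableSet_Iic, setIntegral_const, smul_eq_mul]
    _ ≤ k * (1 - p) := by
        gcongr
        calc volume.real (Ioc 0 1 ∩ Iic k) ≤ volume.real (Ioc 0 k) :=
              measureReal_mono (fun v hv => ⟨hv.1.1, hv.2⟩) measure_Ioc_lt_top.ne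
          _ = k := by rw [volume_real_Ioc_of_le hk, sub_zero]
    _ = u / exp 1 / μ * p := by
        simp only [k]
        field_simp

lemma integrable_binSurplus_prod {ν σ : Measure ℝ} [IsFiniteMeasure ν] [IsFiniteMeasure σ]
    {τ : ℝ → ℝ} (hτ : Measurable τ) (hσ : ∀ᵐ p ∂σ, p ∈ Icc (0 : ℝ) 1) :
    Integrable (Function.uncurry fun v p => binSurplus b₁ (b₁ + 1) p (τ v)) (ν.prod σ) :=
  Integrable.of_bound ((measurable_binSurplus_uncurry _ _).comp
      (measurable_snd.prodMk (hτ.comp measurable_fst))).aestronglyMeasurable 1 <|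
    Measure.quasiMeasurePreserving_snd.ae (p := fun p => p ∈ Icc (0 : ℝ) 1) hσ |>.mono
      fun _ hz => abs_binSurplus_le_one hz

theorem exists_regret_ge (hμ : 0 < μ) (hμ₁ : μ ≤ 1) (hu : 0 < u) (hub : u ≤ b₁ * μ)
    (hu₁ : u ≤ 1 - μ) (σ : Measure ℝ) [IsProbabilityMeasure σ] (hσ : ∀ᵐ p ∂σ, p ∈ Icc (0 : ℝ) 1)
    (hmean : ∫ p, p ∂σ = μ) :
    ∃ s, 0 ≤ s ∧ u / exp 1 ≤ binUstar b₁ (b₁ + 1) μ s - ∫ p, binSurplus b₁ (b₁ + 1) p s ∂σ := by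
  let ν := volume.restrict (Ioc (0 : ℝ) 1)
  have : IsProbabilityMeasure ν := ⟨by simp [ν]⟩
  have hτ := measurable_advQuantile b₁ μ u
  have hprod := integrable_binSurplus_prod (b₁ := b₁) (ν := ν) hτ hσ
  have hid : Integrable (fun p => p) σ :=
    Integrable.of_bound measurable_id'.aestronglyMeasurable 1 (hσ.mono fun p hp => by
      rw [Real.norm_eq_abs, abs_le]; constructor <;> linarith [hp.1, hp.2])
  have hW : ∫ v, ∫ p, binSurplus b₁ (b₁ + 1) p (advQuantile b₁ μ u v) ∂σ ∂ν ≤ u / exp 1 :=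
    calc _ = ∫ p, ∫ v, binSurplus b₁ (b₁ + 1) p (advQuantile b₁ μ u v) ∂ν ∂σ :=
          integral_integral_swap hprod
      _ ≤ ∫ p, u / exp 1 / μ * p ∂σ :=
          integral_mono_ae hprod.integral_prod_right (hid.const_mul _)
            (hσ.mono fun p hp => integral_binSurplus_advQuantile_le hμ hu hp)
      _ = u / exp 1 := by rw [integral_const_mul, hmean, div_mul_cancel₀ _ hμ.ne']
  have hU : Integrable (fun v => binUstar b₁ (b₁ + 1) μ (advQuantile b₁ μ u v)) ν := by
    refine Integrable.of_bound ((measurable_binUstar _ _ _).comp hτ).aestronglyMeasurable u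
      (ae_restrict_of_forall_mem measurableSet_Ioc fun v hv => ?_)
    rw [binUstar_advQuantile hμ hμ₁ hu.le hub hu₁ hv.1, Real.norm_eq_abs,
      abs_of_nonneg (le_min hu.le (div_nonneg (by positivity) hv.1.le))]
    exact min_le_left _ _
  have hWint : Integrable
      (fun v => ∫ p, binSurplus b₁ (b₁ + 1) p (advQuantile b₁ μ u v) ∂σ) ν :=
    hprod.integral_prod_left
  obtain ⟨v, hv⟩ := exists_integral_le (hU.sub hWint)
  refine ⟨advQuantile b₁ μ u v, advQuantile_nonneg hμ hub v, ?_⟩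
  simp only [Pi.sub_apply] at hv
  rw [integral_sub hU hWint, integral_binUstar_advQuantile hμ hμ₁ hu hub hu₁] at hv
  linarith

end Adversary

theorem regret_bbmSegmentation_le {b₁ μ s : ℝ} (hb₁ : 0 < b₁) (hμ : 0 < μ) (hμ₁ : μ < 1)
    (hs : 0 ≤ s) :
    binUstar b₁ (b₁ + 1) μ s - ∫ p, binSurplus b₁ (b₁ + 1) p s
        ∂(bbmSegmentation b₁ μ (min (b₁ * μ) (1 - μ))) ≤ min (b₁ * μ) (1 - μ) / exp 1 := by
  have hu : 0 < min (b₁ * μ) (1 - μ) := lt_min (mul_pos hb₁ hμ) (by linarith)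
  rw [binUstar_eq_max_min hμ hμ₁.le hs,
    integral_binSurplus_bbmSegmentation hμ hu (min_le_right _ _)]
  refine (max_sub_max_le_max _ _ _ _).trans_eq ?_
  rw [sub_zero, sub_sub_cancel, max_eq_right (by positivity)]

/-- Minimax regret in the binary buyer-type model equals U*(0)/e: every
segmentation (Bayes-plausible distribution over posteriors with mean μ) incurs
regret at least U*(0)/e against some seller valuation, and some segmentation
(the BBM hazard-rate one) guarantees regret at most U*(0)/e against every
seller valuation; moreover U*(0) = 1-μ if μ > 1/b₂ and b₁μ otherwise. -/
theorem stmt_19 (b₁ b₂ μ : ℝ) (hb : b₂ = b₁ + 1) (hb₁ : 0 < b₁)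
    (hμ : μ ∈ Set.Ioo (0:ℝ) 1) :
    (∀ σ : Measure ℝ, IsProbabilityMeasure σ → σ (Set.Icc (0:ℝ) 1)ᶜ = 0 →
      (∫ p, p ∂σ) = μ →
      ∃ s, 0 ≤ s ∧
        binUstar b₁ b₂ μ 0 / Real.exp 1 ≤
          binUstar b₁ b₂ μ s - ∫ p, binSurplus b₁ b₂ p s ∂σ) ∧
    (∃ σ : Measure ℝ, IsProbabilityMeasure σ ∧ σ (Set.Icc (0:ℝ) 1)ᶜ = 0 ∧
      (∫ p, p ∂σ) = μ ∧
      ∀ s, 0 ≤ s →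
        binUstar b₁ b₂ μ s - (∫ p, binSurplus b₁ b₂ p s ∂σ) ≤
          binUstar b₁ b₂ μ 0 / Real.exp 1) ∧
    binUstar b₁ b₂ μ 0 = (if 1 / b₂ < μ then 1 - μ else b₁ * μ) := by
  obtain ⟨hμ₀, hμ₁⟩ := hμ
  subst hb
  have hu : 0 < min (b₁ * μ) (1 - μ) := lt_min (mul_pos hb₁ hμ₀) (by linarith)
  have hU₀ : binUstar b₁ (b₁ + 1) μ 0 = min (b₁ * μ) (1 - μ) := by
    rw [binUstar_eq_max_min hμ₀ hμ₁.le le_rfl, sub_zero, min_eq_left (min_le_left _ _),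
      max_eq_right hu.le]
  rw [hU₀]
  refine ⟨fun σ _ hσ hmean => exists_regret_ge hμ₀ hμ₁.le hu (min_le_left _ _) (min_le_right _ _)
      σ (ae_iff.2 hσ) hmean, ⟨bbmSegmentation b₁ μ (min (b₁ * μ) (1 - μ)),
      isProbabilityMeasure_bbmSegmentation hμ₀ hu (min_le_right _ _),
      ae_iff.1 (ae_mem_Icc_bbmSegmentation hμ₀ hu),
      integral_id_bbmSegmentation hμ₀ hu (min_le_right _ _),
      fun s hs => regret_bbmSegmentation_le hb₁ hμ₀ hμ₁ hs⟩, min_mul_one_sub_eq_ite (by linarith)⟩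
end
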